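/- arXiv:1709.07557 — 7 statements merged into one kernel-verified Lean document; each statement's English description precedes it below -/
import Mathlib

section
/- For any matrix D with columns of unit ℓ₂-norm, spark(D) ≥ 1 + 1/μ(D), where μ(D) is the mutual coherence of D. -/
open Finset

/-- Spark lower bound via mutual coherence: for a matrix `D` with unit-norm columns and
mutual coherence `μ > 0`, every nonzero `c` in the kernel of `D` has at least `1 + 1/μ`
nonzero entries, i.e. `spark(D) ≥ 1 + 1/μ(D)`. -/
theorem spark_ge_one_add_inv_mutual_coherence
    {M K : ℕ} (D : Matrix (Fin M) (Fin K) ℝ) (μ : ℝ)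
    (hcol : ∀ j, ∑ m, D m j ^ 2 = 1)
    (hμ : IsGreatest {x : ℝ | ∃ i j : Fin K, i ≠ j ∧ x = |∑ m, D m i * D m j|} μ)
    (hμpos : 0 < μ)
    (c : Fin K → ℝ) (hc : c ≠ 0) (hker : D.mulVec c = 0) :
    1 + 1 / μ ≤ ((Finset.univ.filter fun j => c j ≠ 0).card : ℝ) := by
  classical
  set s := Finset.univ.filter fun j => c j ≠ 0 with hs
  obtain ⟨i0, hi0⟩ : ∃ i, c i ≠ 0 := by
    by_contra h; push_neg at h; exact hc (funext h)
  have hi0s : i0 ∈ s := by simp [hs, hi0]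
  obtain ⟨i, his, hmax⟩ := s.exists_max_image (fun j => |c j|) ⟨i0, hi0s⟩
  have hci : c i ≠ 0 := by simpa [hs] using his
  have hcipos : 0 < |c i| := abs_pos.mpr hci
  -- key equation: expand ⟨D_i, D c⟩ = 0
  have h0 : (0 : ℝ) = ∑ j, (∑ m, D m i * D m j) * c j := by
    have h1 : ∑ m, D m i * (D.mulVec c) m = 0 := by simp [hker]
    calc (0:ℝ) = ∑ m, D m i * (D.mulVec c) m := h1.symm
      _ = ∑ m, ∑ j, D m i * (D m j * c j) := by
          simp [Matrix.mulVec, dotProduct, Finset.mul_sum]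
      _ = ∑ j, ∑ m, D m i * (D m j * c j) := Finset.sum_comm
      _ = ∑ j, (∑ m, D m i * D m j) * c j := by
          refine Finset.sum_congr rfl fun j _ => ?_
          rw [Finset.sum_mul]; simp only [mul_assoc]
  -- restrict sum to support
  have h2 : ∑ j, (∑ m, D m i * D m j) * c j = ∑ j ∈ s, (∑ m, D m i * D m j) * c j := by
    refine (Finset.sum_subset (Finset.subset_univ s) ?_).symm
    intro j _ hj
    have : c j = 0 := by by_contra h; exact hj (by simp [hs, h])
    simp [this]
  have hgram : (∑ m, D m i * D m i) = 1 := by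
    have := hcol i; simpa [sq] using this
  have h3 : ∑ j ∈ s, (∑ m, D m i * D m j) * c j
      = c i + ∑ j ∈ s.erase i, (∑ m, D m i * D m j) * c j := by
    rw [← Finset.add_sum_erase s _ his, hgram, one_mul]
  have key : c i = - ∑ j ∈ s.erase i, (∑ m, D m i * D m j) * c j := by
    have := h0.trans (h2.trans h3)
    linarith
  -- bound each term
  have hbound : |c i| ≤ ((s.erase i).card : ℝ) * (μ * |c i|) := by
    calc |c i| = |∑ j ∈ s.erase i, (∑ m, D m i * D m j) * c j| := by
          rw [key, abs_neg]
      _ ≤ ∑ j ∈ s.erase i, |(∑ m, D m i * D m j) * c j| :=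
          Finset.abs_sum_le_sum_abs _ _
      _ ≤ ∑ j ∈ s.erase i, μ * |c i| := by
          refine Finset.sum_le_sum fun j hj => ?_
          obtain ⟨hji, hjs⟩ := Finset.mem_erase.mp hj
          rw [abs_mul]
          have hμj : |∑ m, D m i * D m j| ≤ μ := hμ.2 ⟨i, j, hji.symm, rfl⟩
          have hcj : |c j| ≤ |c i| := hmax j hjs
          exact mul_le_mul hμj hcj (abs_nonneg _) hμpos.le
      _ = ((s.erase i).card : ℝ) * (μ * |c i|) := by
          rw [Finset.sum_const, nsmul_eq_mul]
  have hcard : ((s.erase i).card : ℝ) = (s.card : ℝ) - 1 := by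
    rw [Finset.card_erase_of_mem his, Nat.cast_sub (Finset.card_pos.mpr ⟨i, his⟩)]
    simp
  rw [hcard] at hbound
  -- conclude
  have h4 : 1 ≤ ((s.card : ℝ) - 1) * μ := by
    nlinarith [hbound, hcipos]
  have h5 : 1 / μ ≤ (s.card : ℝ) - 1 := by
    rw [div_le_iff₀ hμpos]; linarith
  linarith
end

section
/- If the spark of a matrix D exceeds 2s, then any s-sparse solution of Dc = u is the unique s-sparse solution: if Dc = Dc' and both c and c' have at most s nonzero entries, then c = c'. -/
/-- If the spark of `D` exceeds `2s` (every nonzero kernel vector has more than `2s`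
nonzero entries), then any `s`-sparse solution of `Dc = u` is unique among `s`-sparse
solutions. -/
theorem sparse_solution_unique_of_spark_gt
    {M K : ℕ} (D : Matrix (Fin M) (Fin K) ℝ) (s : ℕ)
    (hspark : ∀ c : Fin K → ℝ, c ≠ 0 → D.mulVec c = 0 →
      2 * s < (Finset.univ.filter fun j => c j ≠ 0).card)
    (c c' : Fin K → ℝ)
    (hc : (Finset.univ.filter fun j => c j ≠ 0).card ≤ s)
    (hc' : (Finset.univ.filter fun j => c' j ≠ 0).card ≤ s)
    (h : D.mulVec c = D.mulVec c') :
    c = c' := by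
  by_contra hne
  have hd : c - c' ≠ 0 := sub_ne_zero.mpr hne
  have hk : D.mulVec (c - c') = 0 := by
    rw [Matrix.mulVec_sub, h, sub_self]
  have hlt := hspark (c - c') hd hk
  have hsub : (Finset.univ.filter fun j => (c - c') j ≠ 0) ⊆
      (Finset.univ.filter fun j => c j ≠ 0) ∪ (Finset.univ.filter fun j => c' j ≠ 0) := by
    intro j hj
    simp only [Finset.mem_filter, Finset.mem_union, Finset.mem_univ, true_and] at *
    by_contra hcon
    push_neg at hcon
    exact hj (by simp [Pi.sub_apply, hcon.1, hcon.2])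
  have := (Finset.card_le_card hsub).trans
    ((Finset.card_union_le _ _).trans (add_le_add hc hc'))
  omega
end

section
/- If the spark of D exceeds 2s, then every s-sparse vector c is the unique minimizer of ‖·‖₀ subject to Dx = Dc. -/
/-- If the spark of `D` exceeds `2s`, then every `s`-sparse vector `c` is the unique
minimizer of `‖·‖₀` subject to `Dx = Dc`. -/
theorem sparse_vector_unique_l0_minimizer_of_spark_gt
    {M K : ℕ} (D : Matrix (Fin M) (Fin K) ℝ) (s : ℕ)
    (hspark : ∀ c : Fin K → ℝ, c ≠ 0 → D.mulVec c = 0 →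
      2 * s < (Finset.univ.filter fun j => c j ≠ 0).card)
    (c : Fin K → ℝ)
    (hc : (Finset.univ.filter fun j => c j ≠ 0).card ≤ s) :
    (∀ x : Fin K → ℝ, D.mulVec x = D.mulVec c →
        (Finset.univ.filter fun j => c j ≠ 0).card ≤
          (Finset.univ.filter fun j => x j ≠ 0).card) ∧
    (∀ x : Fin K → ℝ, D.mulVec x = D.mulVec c →
        (Finset.univ.filter fun j => x j ≠ 0).card ≤
          (Finset.univ.filter fun j => c j ≠ 0).card → x = c) := by
  have key : ∀ x : Fin K → ℝ, D.mulVec x = D.mulVec c → x ≠ c →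
      2 * s < (Finset.univ.filter fun j => x j ≠ 0).card +
        (Finset.univ.filter fun j => c j ≠ 0).card := by
    intro x hx hne
    have hd : D.mulVec (x - c) = 0 := by
      rw [Matrix.mulVec_sub, hx, sub_self]
    have hnz : x - c ≠ 0 := sub_ne_zero.mpr hne
    have h1 := hspark (x - c) hnz hd
    have hsub : (Finset.univ.filter fun j => (x - c) j ≠ 0) ⊆
        (Finset.univ.filter fun j => x j ≠ 0) ∪
        (Finset.univ.filter fun j => c j ≠ 0) := by
      intro j hj
      simp only [Finset.mem_filter, Finset.mem_union, Finset.mem_univ, true_and] at *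
      by_contra hcon
      push_neg at hcon
      simp [Pi.sub_apply, hcon.1, hcon.2] at hj
    calc 2 * s < (Finset.univ.filter fun j => (x - c) j ≠ 0).card := h1
      _ ≤ ((Finset.univ.filter fun j => x j ≠ 0) ∪
          (Finset.univ.filter fun j => c j ≠ 0)).card := Finset.card_le_card hsub
      _ ≤ _ := Finset.card_union_le _ _
  constructor
  · intro x hx
    by_contra hlt
    push_neg at hlt
    have hne : x ≠ c := by rintro rfl; exact lt_irrefl _ hlt
    have := key x hx hne
    omega
  · intro x hx hle
    by_contra hne
    have := key x hx hne
    omega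
end

section
/- For any matrix D ∈ ℝ^{M×K} with K > M and unit-norm columns, the mutual coherence satisfies μ(D) ≥ √((K−M)/(M(K−1))) (the Welch bound). -/
/-- Welch bound: for `D ∈ ℝ^{M×K}` with `K > M` and unit-norm columns, the mutual
coherence `μ(D) = max_{i≠j} |D_i^T D_j|` satisfies `μ(D) ≥ √((K−M)/(M(K−1)))`. -/
theorem welch_bound
    {M K : ℕ} (hMK : M < K) (D : Matrix (Fin M) (Fin K) ℝ) (μ : ℝ)
    (hcol : ∀ j, ∑ m, D m j ^ 2 = 1)
    (hμ : IsGreatest {x : ℝ | ∃ i j : Fin K, i ≠ j ∧ x = |∑ m, D m i * D m j|} μ) :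
    Real.sqrt (((K : ℝ) - M) / (M * ((K : ℝ) - 1))) ≤ μ := by
  have hK0 : 0 < K := lt_of_le_of_lt (Nat.zero_le M) hMK
  have hM0 : 0 < M := by
    by_contra h
    have hM : M = 0 := by omega
    subst hM
    have := hcol ⟨0, hK0⟩
    simp at this
  obtain ⟨⟨i0, j0, hij0, hμeq⟩, hub⟩ := hμ
  have hμ0 : 0 ≤ μ := hμeq ▸ abs_nonneg _
  set S : ℝ := ∑ i : Fin K, ∑ j : Fin K, (∑ m, D m i * D m j) ^ 2 with hS
  have hswap : S = ∑ m : Fin M, ∑ n : Fin M, (∑ i : Fin K, D m i * D n i) ^ 2 := by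
    have e1 : S = ∑ i : Fin K, ∑ j : Fin K, ∑ m : Fin M, ∑ n : Fin M,
        (D m i * D n i) * (D m j * D n j) := by
      rw [hS]
      refine Finset.sum_congr rfl fun i _ => Finset.sum_congr rfl fun j _ => ?_
      rw [sq, Finset.sum_mul_sum]
      exact Finset.sum_congr rfl fun m _ => Finset.sum_congr rfl fun n _ => by ring
    have e2 : ∀ m n : Fin M, (∑ i : Fin K, D m i * D n i) ^ 2
        = ∑ i : Fin K, ∑ j : Fin K, (D m i * D n i) * (D m j * D n j) := by
      intro m n
      rw [sq, Finset.sum_mul_sum]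
    rw [e1]
    calc ∑ i : Fin K, ∑ j : Fin K, ∑ m : Fin M, ∑ n : Fin M,
          (D m i * D n i) * (D m j * D n j)
        = ∑ i : Fin K, ∑ m : Fin M, ∑ j : Fin K, ∑ n : Fin M,
          (D m i * D n i) * (D m j * D n j) :=
          Finset.sum_congr rfl fun i _ => Finset.sum_comm
      _ = ∑ m : Fin M, ∑ i : Fin K, ∑ j : Fin K, ∑ n : Fin M,
          (D m i * D n i) * (D m j * D n j) := Finset.sum_comm
      _ = ∑ m : Fin M, ∑ i : Fin K, ∑ n : Fin M, ∑ j : Fin K,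
          (D m i * D n i) * (D m j * D n j) :=
          Finset.sum_congr rfl fun m _ => Finset.sum_congr rfl fun i _ => Finset.sum_comm
      _ = ∑ m : Fin M, ∑ n : Fin M, ∑ i : Fin K, ∑ j : Fin K,
          (D m i * D n i) * (D m j * D n j) :=
          Finset.sum_congr rfl fun m _ => Finset.sum_comm
      _ = ∑ m : Fin M, ∑ n : Fin M, (∑ i : Fin K, D m i * D n i) ^ 2 :=
          Finset.sum_congr rfl fun m _ => Finset.sum_congr rfl fun n _ => (e2 m n).symm
  have hdiagM : ∑ m : Fin M, (∑ i : Fin K, D m i * D m i) = (K : ℝ) := by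
    rw [Finset.sum_comm]
    have h : ∀ i : Fin K, ∑ m : Fin M, D m i * D m i = 1 := by
      intro i; rw [← hcol i]; exact Finset.sum_congr rfl fun m _ => (sq (D m i)).symm
    simp [h]
  have hMpos : (0 : ℝ) < M := by exact_mod_cast hM0
  have hlow : (K : ℝ) ^ 2 / M ≤ S := by
    rw [hswap]
    have h1 : ∑ m : Fin M, (∑ i : Fin K, D m i * D m i) ^ 2
        ≤ ∑ m : Fin M, ∑ n : Fin M, (∑ i : Fin K, D m i * D n i) ^ 2 := by
      refine Finset.sum_le_sum fun m _ => ?_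
      calc (∑ i : Fin K, D m i * D m i) ^ 2
          = ∑ n ∈ ({m} : Finset (Fin M)), (∑ i : Fin K, D m i * D n i) ^ 2 := by simp
        _ ≤ ∑ n : Fin M, (∑ i : Fin K, D m i * D n i) ^ 2 :=
            Finset.sum_le_sum_of_subset_of_nonneg (Finset.subset_univ _)
              (fun _ _ _ => sq_nonneg _)
    have h2 : ((K : ℝ)) ^ 2 ≤ (M : ℝ) * ∑ m : Fin M, (∑ i : Fin K, D m i * D m i) ^ 2 := by
      have := sq_sum_le_card_mul_sum_sq (s := (Finset.univ : Finset (Fin M)))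
        (f := fun m => ∑ i : Fin K, D m i * D m i)
      simpa [hdiagM] using this
    rw [div_le_iff₀ hMpos]
    nlinarith [h1, h2]
  have hupper : S ≤ (K : ℝ) + K * ((K : ℝ) - 1) * μ ^ 2 := by
    have hterm : ∀ i j : Fin K, i ≠ j → (∑ m, D m i * D m j) ^ 2 ≤ μ ^ 2 := by
      intro i j hij
      have h := hub ⟨i, j, hij, rfl⟩
      have h2 : |∑ m, D m i * D m j| ^ 2 ≤ μ ^ 2 :=
        pow_le_pow_left₀ (abs_nonneg _) h 2
      simpa [sq_abs] using h2
    have hdiag : ∀ i : Fin K, (∑ m, D m i * D m i) ^ 2 = 1 := by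
      intro i
      have h : ∑ m, D m i * D m i = 1 := by
        rw [← hcol i]; exact Finset.sum_congr rfl fun m _ => (sq (D m i)).symm
      rw [h]; norm_num
    have hle : S ≤ ∑ i : Fin K, ∑ j : Fin K, (if i = j then 1 else μ ^ 2) := by
      refine Finset.sum_le_sum fun i _ => Finset.sum_le_sum fun j _ => ?_
      by_cases h : i = j
      · subst h; simp [hdiag i]
      · simpa [h] using hterm i j h
    refine hle.trans ?_
    have hrow : ∀ i : Fin K, ∑ j : Fin K, (if i = j then (1:ℝ) else μ ^ 2)
        = 1 + ((K : ℝ) - 1) * μ ^ 2 := by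
      intro i
      have e : ∀ j : Fin K, (if i = j then (1:ℝ) else μ ^ 2)
          = μ ^ 2 + (if i = j then 1 - μ ^ 2 else 0) := by
        intro j; split <;> ring
      rw [Finset.sum_congr rfl fun j _ => e j, Finset.sum_add_distrib,
        Finset.sum_ite_eq]
      simp [Finset.card_univ]
      ring
    rw [Finset.sum_congr rfl fun i _ => hrow i]
    simp [Finset.card_univ]
    ring_nf
    nlinarith [sq_nonneg μ]
  have hm1 : (1:ℝ) ≤ M := by exact_mod_cast hM0
  have hkm : (M:ℝ) + 1 ≤ K := by exact_mod_cast hMK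
  have hKpos : (0:ℝ) < K := by exact_mod_cast hK0
  have hfin : ((K:ℝ) - M) / ((M:ℝ) * ((K:ℝ) - 1)) ≤ μ ^ 2 := by
    have hden : 0 < (M:ℝ) * ((K:ℝ) - 1) := by nlinarith
    rw [div_le_iff₀ hden]
    have h := hlow.trans hupper
    rw [div_le_iff₀ hMpos] at h
    nlinarith [h, hKpos]
  calc Real.sqrt (((K : ℝ) - M) / (M * ((K : ℝ) - 1)))
      ≤ Real.sqrt (μ ^ 2) := Real.sqrt_le_sqrt hfin
    _ = μ := by rw [Real.sqrt_sq hμ0]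
end

section
/- For a matrix Ψ with unit-norm columns, the restricted isometry constant of order s satisfies δ_s ≤ (s−1)·μ(Ψ), where μ(Ψ) is the mutual coherence. -/
/-- For a matrix `Ψ` with unit-norm columns and mutual coherence `μ`, the restricted
isometry constant of order `s` satisfies `δ_s ≤ (s−1)·μ`: the RIP inequality with
constant `(s−1)μ` holds for all `s`-sparse vectors. -/
theorem rip_constant_le_coherence_bound
    {M K : ℕ} (Ψ : Matrix (Fin M) (Fin K) ℝ) (s : ℕ) (μ : ℝ)
    (hcol : ∀ j, ∑ m, Ψ m j ^ 2 = 1)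
    (hμ : IsGreatest {x : ℝ | ∃ i j : Fin K, i ≠ j ∧ x = |∑ m, Ψ m i * Ψ m j|} μ)
    (hμs : ((s : ℝ) - 1) * μ < 1)
    (c : Fin K → ℝ) (hc : (Finset.univ.filter fun j => c j ≠ 0).card ≤ s) :
    (1 - ((s : ℝ) - 1) * μ) * ∑ j, c j ^ 2 ≤ ∑ i, (Ψ.mulVec c i) ^ 2 ∧
    ∑ i, (Ψ.mulVec c i) ^ 2 ≤ (1 + ((s : ℝ) - 1) * μ) * ∑ j, c j ^ 2 := by
  obtain ⟨⟨i0, j0, hij0, hμval⟩, hub⟩ := hμ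
  have hμ0 : 0 ≤ μ := hμval ▸ abs_nonneg _
  have hGle : ∀ j k : Fin K, j ≠ k → |∑ m, Ψ m j * Ψ m k| ≤ μ := fun j k h =>
    hub ⟨j, k, h, rfl⟩
  set Q : ℝ := ∑ j, c j ^ 2 with hQ
  have hQnn : 0 ≤ Q := Finset.sum_nonneg fun _ _ => sq_nonneg _
  -- expand the quadratic form
  have hT : ∑ i, (Ψ.mulVec c i) ^ 2
      = ∑ j, ∑ k, (c j * c k) * ∑ m, Ψ m j * Ψ m k := by
    have key : ∀ i, (Ψ.mulVec c i) ^ 2 = ∑ j, ∑ k, (c j * c k) * (Ψ i j * Ψ i k) := by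
      intro i
      simp only [Matrix.mulVec, dotProduct, sq, Finset.sum_mul_sum]
      exact Finset.sum_congr rfl fun j _ => Finset.sum_congr rfl fun k _ => by ring
    simp only [key]
    rw [Finset.sum_comm]
    refine Finset.sum_congr rfl fun j _ => ?_
    rw [Finset.sum_comm]
    exact Finset.sum_congr rfl fun k _ => (Finset.mul_sum _ _ _).symm
  -- split diagonal
  have hsplit : ∑ i, (Ψ.mulVec c i) ^ 2
      = Q + ∑ j, ∑ k ∈ Finset.univ.erase j, (c j * c k) * ∑ m, Ψ m j * Ψ m k := by
    rw [hT, hQ, ← Finset.sum_add_distrib]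
    refine Finset.sum_congr rfl fun j _ => ?_
    rw [← Finset.add_sum_erase _ _ (Finset.mem_univ j)]
    congr 1
    have : ∑ m, Ψ m j * Ψ m j = 1 := by
      rw [← hcol j]; exact Finset.sum_congr rfl fun m _ => (sq (Ψ m j)).symm
    rw [this]; ring
  set E : ℝ := ∑ j, ∑ k ∈ Finset.univ.erase j, (c j * c k) * ∑ m, Ψ m j * Ψ m k with hE
  -- bound |E|
  have habs : |E| ≤ ((s : ℝ) - 1) * μ * Q := by
    have h1 : |E| ≤ ∑ j, ∑ k ∈ Finset.univ.erase j, |c j| * |c k| * μ := by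
      refine (Finset.abs_sum_le_sum_abs _ _).trans (Finset.sum_le_sum fun j _ => ?_)
      refine (Finset.abs_sum_le_sum_abs _ _).trans (Finset.sum_le_sum fun k hk => ?_)
      rw [abs_mul, abs_mul]
      exact mul_le_mul_of_nonneg_left (hGle j k (Finset.ne_of_mem_erase hk).symm
        |>.trans_eq rfl) (by positivity) |>.trans_eq rfl
    have h2 : ∑ j, ∑ k ∈ Finset.univ.erase j, |c j| * |c k| * μ
        = ((∑ j, |c j|) ^ 2 - Q) * μ := by
      have : ∀ j : Fin K, ∑ k ∈ Finset.univ.erase j, |c j| * |c k| * μ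
          = (|c j| * ∑ k, |c k| - c j ^ 2) * μ := by
        intro j
        rw [← Finset.sum_mul, ← Finset.mul_sum,
          ← Finset.add_sum_erase _ (fun k => |c k|) (Finset.mem_univ j)]
        linear_combination (-μ) * sq_abs (c j)
      rw [Finset.sum_congr rfl fun j _ => this j]
      rw [← Finset.sum_mul, Finset.sum_sub_distrib, ← Finset.sum_mul, sq]
    have h3 : (∑ j, |c j|) ^ 2 ≤ (s : ℝ) * Q := by
      set S := Finset.univ.filter fun j => c j ≠ 0 with hS
      have e1 : ∑ j, |c j| = ∑ j ∈ S, |c j| := by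
        rw [Finset.sum_filter]
        refine Finset.sum_congr rfl fun j _ => ?_
        by_cases h : c j = 0 <;> simp [h]
      have e2 : ∑ j ∈ S, c j ^ 2 ≤ Q := by
        refine Finset.sum_le_sum_of_subset_of_nonneg (Finset.filter_subset _ _)
          fun _ _ _ => sq_nonneg _
      calc (∑ j, |c j|) ^ 2 = (∑ j ∈ S, |c j|) ^ 2 := by rw [e1]
        _ ≤ (S.card : ℝ) * ∑ j ∈ S, |c j| ^ 2 := by
            exact sq_sum_le_card_mul_sum_sq
        _ = (S.card : ℝ) * ∑ j ∈ S, c j ^ 2 := by simp [sq_abs]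
        _ ≤ (s : ℝ) * Q := by
            apply mul_le_mul (by exact_mod_cast hc) e2
              (Finset.sum_nonneg fun _ _ => sq_nonneg _) (by positivity)
    calc |E| ≤ ((∑ j, |c j|) ^ 2 - Q) * μ := h1.trans_eq h2
      _ ≤ ((s : ℝ) * Q - Q) * μ := by nlinarith
      _ = ((s : ℝ) - 1) * μ * Q := by ring
  have hlo := abs_le.mp habs
  constructor
  · rw [hsplit]; nlinarith [hlo.1]
  · rw [hsplit]; nlinarith [hlo.2]
end

section
/- Among multi-indices α ∈ ℕ₀^d with total degree ‖α‖₁ ≤ k and d ≥ k, the product ∏_{i=1}^d (2α_i+1) is maximized by placing each unit of degree in a distinct coordinate, giving maximum value 3^k; hence the tensor-product Legendre bound satisfies max_{‖α‖₁≤k} ∏_{i=1}^d (2α_i+1)^{1/2} = 3^{k/2} when d ≥ k. -/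
lemma aux_two_mul_add_one_le (a : ℕ) : 2 * a + 1 ≤ 3 ^ a := by
  induction a with
  | zero => simp
  | succ n ih => rw [pow_succ]; omega

lemma aux_sqrt_prod {ι : Type*} (s : Finset ι) (f : ι → ℝ) (hf : ∀ i ∈ s, 0 ≤ f i) :
    ∏ i ∈ s, Real.sqrt (f i) = Real.sqrt (∏ i ∈ s, f i) := by
  induction s using Finset.cons_induction with
  | empty => simp
  | cons a s ha ih =>
    rw [Finset.prod_cons, Finset.prod_cons, ih (fun i hi => hf i (Finset.mem_cons_of_mem hi)),
        Real.sqrt_mul (hf a (Finset.mem_cons_self a s))]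

lemma aux_sqrt_pow_three (k : ℕ) : Real.sqrt (3 ^ k) = Real.sqrt 3 ^ k := by
  have h : (Real.sqrt 3 ^ k) ^ 2 = 3 ^ k := by
    rw [← pow_mul, mul_comm, pow_mul, Real.sq_sqrt (by norm_num : (0:ℝ) ≤ 3)]
  rw [← h, Real.sqrt_sq (pow_nonneg (Real.sqrt_nonneg 3) k)]

/-- Among multi-indices `α ∈ ℕ₀^d` with `‖α‖₁ ≤ k` and `d ≥ k`, the product
`∏ i, (2α_i + 1)` is maximized (with value `3^k`) by spreading the degree over
distinct coordinates; consequently `max_{‖α‖₁≤k} ∏ (2α_i+1)^{1/2} = 3^{k/2} = (√3)^k`. -/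
theorem legendre_bound_max_of_dim_ge_order
    (d k : ℕ) (hdk : k ≤ d) :
    IsGreatest ((fun α : Fin d → ℕ => ∏ i, (2 * α i + 1)) ''
        {α : Fin d → ℕ | ∑ i, α i ≤ k}) (3 ^ k) ∧
    IsGreatest ((fun α : Fin d → ℕ => ∏ i, Real.sqrt (2 * (α i : ℝ) + 1)) ''
        {α : Fin d → ℕ | ∑ i, α i ≤ k}) (Real.sqrt 3 ^ k) := by
  set α₀ : Fin d → ℕ := fun i => if (i : ℕ) < k then 1 else 0 with hα₀
  have hfilter : (Finset.range d).filter (· < k) = Finset.range k := by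
    ext x; simp only [Finset.mem_filter, Finset.mem_range]; omega
  have hsum : ∑ i, α₀ i = k := by
    rw [hα₀, Fin.sum_univ_eq_sum_range (fun i => if i < k then 1 else 0) d,
        ← Finset.sum_filter, hfilter, Finset.sum_const, Finset.card_range, smul_eq_mul, mul_one]
  have hmem : α₀ ∈ {α : Fin d → ℕ | ∑ i, α i ≤ k} := by
    simp [hsum]
  have hprod : ∏ i, (2 * α₀ i + 1) = 3 ^ k := by
    have h1 : ∀ i : Fin d, 2 * α₀ i + 1 = if (i : ℕ) < k then 3 else 1 := by
      intro i; by_cases h : (i : ℕ) < k <;> simp [hα₀, h]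
    rw [Finset.prod_congr rfl (fun i _ => h1 i),
        Fin.prod_univ_eq_prod_range (fun i => if i < k then 3 else 1) d,
        ← Finset.prod_filter, hfilter, Finset.prod_const, Finset.card_range]
  have hub : ∀ α : Fin d → ℕ, ∑ i, α i ≤ k → ∏ i, (2 * α i + 1) ≤ 3 ^ k := by
    intro α hα
    calc ∏ i, (2 * α i + 1) ≤ ∏ i, 3 ^ α i :=
          Finset.prod_le_prod' (fun i _ => aux_two_mul_add_one_le (α i))
      _ = 3 ^ ∑ i, α i := by rw [Finset.prod_pow_eq_pow_sum]
      _ ≤ 3 ^ k := Nat.pow_le_pow_right (by norm_num) hα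
  have hcast : ∀ α : Fin d → ℕ,
      ∏ i, Real.sqrt (2 * (α i : ℝ) + 1) = Real.sqrt ((∏ i, (2 * α i + 1) : ℕ)) := by
    intro α
    rw [aux_sqrt_prod _ _ (fun i _ => by positivity)]
    congr 1
    push_cast
    exact Finset.prod_congr rfl fun i _ => by ring
  constructor
  · exact ⟨⟨α₀, hmem, hprod⟩, by rintro y ⟨α, hα, rfl⟩; exact hub α hα⟩
  · constructor
    · refine ⟨α₀, hmem, ?_⟩
      dsimp only
      rw [hcast, hprod]
      push_cast
      exact aux_sqrt_pow_three k
    · rintro y ⟨α, hα, rfl⟩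
      dsimp only
      rw [hcast]
      calc Real.sqrt ((∏ i, (2 * α i + 1) : ℕ))
          ≤ Real.sqrt ((3:ℝ) ^ k) := by
            apply Real.sqrt_le_sqrt
            exact_mod_cast hub α hα
        _ = Real.sqrt 3 ^ k := aux_sqrt_pow_three k
end

section
/- If a matrix Ψ ∈ ℝ^{M×K} satisfies the RIP of order 2s with constant δ_{2s} < √2 − 1, and c̄ is s-sparse with u = Ψc̄, then c̄ is the unique solution of min ‖c‖₁ subject to Ψc = u restricted to vectors supported on any fixed set containing supp(c̄) of size at most s; in particular, ‖c̄‖₁ ≤ ‖c‖₁ for every c with Ψc = u, with equality only if c = c̄ among s-sparse solutions. -/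
open Finset

private def dotR {M : ℕ} (f g : Fin M → ℝ) : ℝ := ∑ i, f i * g i

private lemma dotR_self {M : ℕ} (f : Fin M → ℝ) : dotR f f = ∑ i, f i ^ 2 := by
  simp [dotR, sq]

private lemma dotR_sum {M : ℕ} (f : Fin M → ℝ) {ι : Type*} (t : Finset ι) (g : ι → Fin M → ℝ) :
    dotR f (∑ j ∈ t, g j) = ∑ j ∈ t, dotR f (g j) := by
  unfold dotR
  simp only [Finset.sum_apply, Finset.mul_sum]
  exact Finset.sum_comm

private lemma dotR_neg {M : ℕ} (f g : Fin M → ℝ) : dotR f (-g) = - dotR f g := by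
  simp [dotR]

private lemma dotR_add_left {M : ℕ} (f g k : Fin M → ℝ) :
    dotR (f + g) k = dotR f k + dotR g k := by
  simp [dotR, add_mul, Finset.sum_add_distrib]

private lemma mulVec_sum {M K : ℕ} (Ψ : Matrix (Fin M) (Fin K) ℝ) {ι : Type*} (t : Finset ι)
    (g : ι → Fin K → ℝ) : Ψ.mulVec (∑ j ∈ t, g j) = ∑ j ∈ t, Ψ.mulVec (g j) := by
  have := map_sum Ψ.mulVecLin g t
  simp only [Matrix.mulVecLin_apply] at this
  exact this

/-- If a sum of squares is zero, the vector is zero. -/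
private lemma eq_zero_of_sum_sq {K : ℕ} (x : Fin K → ℝ) (hx : ∑ j, x j ^ 2 = 0) : x = 0 := by
  funext j
  have h := (Finset.sum_eq_zero_iff_of_nonneg (fun i _ => sq_nonneg (x i))).mp hx j (Finset.mem_univ j)
  exact pow_eq_zero_iff (n := 2) (by norm_num) |>.mp h

/-- base cross inner product bound -/
private lemma cross_base {M K : ℕ} {Ψ : Matrix (Fin M) (Fin K) ℝ} {s : ℕ} {δ : ℝ}
    (hRIP : ∀ c : Fin K → ℝ, (Finset.univ.filter fun j => c j ≠ 0).card ≤ 2 * s →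
      (1 - δ) * ∑ j, c j ^ 2 ≤ ∑ i, (Ψ.mulVec c i) ^ 2 ∧
      ∑ i, (Ψ.mulVec c i) ^ 2 ≤ (1 + δ) * ∑ j, c j ^ 2)
    (x y : Fin K → ℝ)
    (hdisj : ∀ j, x j = 0 ∨ y j = 0)
    (hcard : (Finset.univ.filter fun j => x j ≠ 0).card
      + (Finset.univ.filter fun j => y j ≠ 0).card ≤ 2 * s) :
    |dotR (Ψ.mulVec x) (Ψ.mulVec y)| ≤ δ * (∑ j, x j ^ 2 + ∑ j, y j ^ 2) / 2 := by
  have hsupp : ∀ z : Fin K → ℝ, (∀ j, z j ≠ 0 → (x j ≠ 0 ∨ y j ≠ 0)) →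
      (Finset.univ.filter fun j => z j ≠ 0).card ≤ 2 * s := by
    intro z hz
    refine le_trans (le_trans (Finset.card_le_card ?_) (Finset.card_union_le _ _)) hcard
    intro j hj
    rw [Finset.mem_filter] at hj
    rcases hz j hj.2 with h | h
    · exact Finset.mem_union_left _ (Finset.mem_filter.mpr ⟨Finset.mem_univ j, h⟩)
    · exact Finset.mem_union_right _ (Finset.mem_filter.mpr ⟨Finset.mem_univ j, h⟩)
  have hcard1 : (Finset.univ.filter fun j => (x + y) j ≠ 0).card ≤ 2 * s := by
    refine hsupp _ fun j hj => ?_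
    by_contra hcon
    push_neg at hcon
    exact hj (by simp [Pi.add_apply, hcon.1, hcon.2])
  have hcard2 : (Finset.univ.filter fun j => (x - y) j ≠ 0).card ≤ 2 * s := by
    refine hsupp _ fun j hj => ?_
    by_contra hcon
    push_neg at hcon
    exact hj (by simp [Pi.sub_apply, hcon.1, hcon.2])
  have h1 := hRIP (x + y) hcard1
  have h2 := hRIP (x - y) hcard2
  set A := dotR (Ψ.mulVec x) (Ψ.mulVec y) with hA
  have e1 : ∑ i, (Ψ.mulVec (x + y) i) ^ 2
      = ∑ i, (Ψ.mulVec x i) ^ 2 + 2 * A + ∑ i, (Ψ.mulVec y i) ^ 2 := by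
    have : ∀ i, (Ψ.mulVec (x + y) i) ^ 2
        = (Ψ.mulVec x i) ^ 2 + 2 * (Ψ.mulVec x i * Ψ.mulVec y i) + (Ψ.mulVec y i) ^ 2 := by
      intro i; rw [Matrix.mulVec_add]; simp [Pi.add_apply]; ring
    rw [Finset.sum_congr rfl fun i _ => this i]
    rw [Finset.sum_add_distrib, Finset.sum_add_distrib, ← Finset.mul_sum]
    rfl
  have e2 : ∑ i, (Ψ.mulVec (x - y) i) ^ 2
      = ∑ i, (Ψ.mulVec x i) ^ 2 - 2 * A + ∑ i, (Ψ.mulVec y i) ^ 2 := by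
    have : ∀ i, (Ψ.mulVec (x - y) i) ^ 2
        = (Ψ.mulVec x i) ^ 2 - 2 * (Ψ.mulVec x i * Ψ.mulVec y i) + (Ψ.mulVec y i) ^ 2 := by
      intro i; rw [Matrix.mulVec_sub]; simp [Pi.sub_apply]; ring
    rw [Finset.sum_congr rfl fun i _ => this i]
    rw [Finset.sum_add_distrib, Finset.sum_sub_distrib, ← Finset.mul_sum]
    rfl
  have e3 : ∑ j, ((x + y) j) ^ 2 = ∑ j, x j ^ 2 + ∑ j, y j ^ 2 := by
    rw [← Finset.sum_add_distrib]
    refine Finset.sum_congr rfl fun j _ => ?_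
    rcases hdisj j with h | h <;> simp [Pi.add_apply, h] <;> ring
  have e4 : ∑ j, ((x - y) j) ^ 2 = ∑ j, x j ^ 2 + ∑ j, y j ^ 2 := by
    rw [← Finset.sum_add_distrib]
    refine Finset.sum_congr rfl fun j _ => ?_
    rcases hdisj j with h | h <;> simp [Pi.sub_apply, h] <;> ring
  rw [e1, e3] at h1
  rw [e2, e4] at h2
  rw [abs_le]
  constructor <;> [nlinarith [h1.1, h2.2]; nlinarith [h1.2, h2.1]]

private lemma cross {M K : ℕ} {Ψ : Matrix (Fin M) (Fin K) ℝ} {s : ℕ} {δ : ℝ} (hδ0 : 0 ≤ δ)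
    (hRIP : ∀ c : Fin K → ℝ, (Finset.univ.filter fun j => c j ≠ 0).card ≤ 2 * s →
      (1 - δ) * ∑ j, c j ^ 2 ≤ ∑ i, (Ψ.mulVec c i) ^ 2 ∧
      ∑ i, (Ψ.mulVec c i) ^ 2 ≤ (1 + δ) * ∑ j, c j ^ 2)
    (x y : Fin K → ℝ)
    (hdisj : ∀ j, x j = 0 ∨ y j = 0)
    (hcard : (Finset.univ.filter fun j => x j ≠ 0).card
      + (Finset.univ.filter fun j => y j ≠ 0).card ≤ 2 * s) :
    |dotR (Ψ.mulVec x) (Ψ.mulVec y)|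
      ≤ δ * (Real.sqrt (∑ j, x j ^ 2) * Real.sqrt (∑ j, y j ^ 2)) := by
  have hX0 : (0:ℝ) ≤ ∑ j, x j ^ 2 := Finset.sum_nonneg fun j _ => sq_nonneg _
  have hY0 : (0:ℝ) ≤ ∑ j, y j ^ 2 := Finset.sum_nonneg fun j _ => sq_nonneg _
  by_cases hX : ∑ j, x j ^ 2 = 0
  · have hx0 : x = 0 := eq_zero_of_sum_sq x hX
    have : Ψ.mulVec x = 0 := by rw [hx0, Matrix.mulVec_zero]
    rw [this]
    simp [dotR]
    positivity
  by_cases hY : ∑ j, y j ^ 2 = 0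
  · have hy0 : y = 0 := eq_zero_of_sum_sq y hY
    have : Ψ.mulVec y = 0 := by rw [hy0, Matrix.mulVec_zero]
    rw [this]
    simp [dotR]
    positivity
  have hXpos : (0:ℝ) < ∑ j, x j ^ 2 := lt_of_le_of_ne hX0 (Ne.symm hX)
  have hYpos : (0:ℝ) < ∑ j, y j ^ 2 := lt_of_le_of_ne hY0 (Ne.symm hY)
  have hsXpos : 0 < Real.sqrt (∑ j, x j ^ 2) := Real.sqrt_pos.mpr hXpos
  have hsYpos : 0 < Real.sqrt (∑ j, y j ^ 2) := Real.sqrt_pos.mpr hYpos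
  set t : ℝ := Real.sqrt (Real.sqrt (∑ j, y j ^ 2) / Real.sqrt (∑ j, x j ^ 2)) with ht
  have htpos : 0 < t := Real.sqrt_pos.mpr (div_pos hsYpos hsXpos)
  have ht2 : t ^ 2 = Real.sqrt (∑ j, y j ^ 2) / Real.sqrt (∑ j, x j ^ 2) :=
    Real.sq_sqrt (le_of_lt (div_pos hsYpos hsXpos))
  have hdisj' : ∀ j, (t • x) j = 0 ∨ (t⁻¹ • y) j = 0 := by
    intro j
    rcases hdisj j with h | h
    · left; simp [Pi.smul_apply, h]
    · right; simp [Pi.smul_apply, h]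
  have hfx : (Finset.univ.filter fun j => (t • x) j ≠ 0) = (Finset.univ.filter fun j => x j ≠ 0) := by
    apply Finset.filter_congr
    intro j _
    simp [Pi.smul_apply, smul_eq_mul, htpos.ne']
  have hfy : (Finset.univ.filter fun j => (t⁻¹ • y) j ≠ 0) = (Finset.univ.filter fun j => y j ≠ 0) := by
    apply Finset.filter_congr
    intro j _
    simp [Pi.smul_apply, smul_eq_mul, (inv_pos.mpr htpos).ne']
  have hcard' : (Finset.univ.filter fun j => (t • x) j ≠ 0).card
      + (Finset.univ.filter fun j => (t⁻¹ • y) j ≠ 0).card ≤ 2 * s := by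
    rw [hfx, hfy]; exact hcard
  have hb := cross_base hRIP (t • x) (t⁻¹ • y) hdisj' hcard'
  have hdot : dotR (Ψ.mulVec (t • x)) (Ψ.mulVec (t⁻¹ • y)) = dotR (Ψ.mulVec x) (Ψ.mulVec y) := by
    rw [Matrix.mulVec_smul, Matrix.mulVec_smul]
    unfold dotR
    rw [← Finset.sum_congr rfl fun i _ => rfl]
    have : ∀ i, (t • Ψ.mulVec x) i * (t⁻¹ • Ψ.mulVec y) i
        = (t * t⁻¹) * (Ψ.mulVec x i * Ψ.mulVec y i) := by
      intro i; simp [Pi.smul_apply, smul_eq_mul]; ring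
    rw [Finset.sum_congr rfl fun i _ => this i, ← Finset.mul_sum,
      mul_inv_cancel₀ htpos.ne', one_mul]
  have hsx : ∑ j, ((t • x) j) ^ 2 = t ^ 2 * ∑ j, x j ^ 2 := by
    rw [Finset.mul_sum]
    refine Finset.sum_congr rfl fun j _ => ?_
    simp [Pi.smul_apply, smul_eq_mul]; ring
  have hsy : ∑ j, ((t⁻¹ • y) j) ^ 2 = (t ^ 2)⁻¹ * ∑ j, y j ^ 2 := by
    rw [Finset.mul_sum]
    refine Finset.sum_congr rfl fun j _ => ?_
    simp [Pi.smul_apply, smul_eq_mul]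
    ring
  rw [hdot, hsx, hsy, ht2] at hb
  have hXX : Real.sqrt (∑ j, x j ^ 2) * Real.sqrt (∑ j, x j ^ 2) = ∑ j, x j ^ 2 :=
    Real.mul_self_sqrt hX0
  have hYY : Real.sqrt (∑ j, y j ^ 2) * Real.sqrt (∑ j, y j ^ 2) = ∑ j, y j ^ 2 :=
    Real.mul_self_sqrt hY0
  have key : Real.sqrt (∑ j, y j ^ 2) / Real.sqrt (∑ j, x j ^ 2) * ∑ j, x j ^ 2
      + (Real.sqrt (∑ j, y j ^ 2) / Real.sqrt (∑ j, x j ^ 2))⁻¹ * ∑ j, y j ^ 2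
      = 2 * (Real.sqrt (∑ j, x j ^ 2) * Real.sqrt (∑ j, y j ^ 2)) := by
    field_simp
    nlinarith [hXX, hYY]
  rw [key] at hb
  linarith [hb]

private lemma l1_le_sqrt_card {K : ℕ} (T : Finset (Fin K)) (h : Fin K → ℝ) (s : ℕ)
    (hcard : T.card ≤ s) :
    ∑ a ∈ T, |h a| ≤ Real.sqrt s * Real.sqrt (∑ a ∈ T, h a ^ 2) := by
  have h1 : (∑ a ∈ T, |h a|) ^ 2 ≤ (∑ a ∈ T, |h a| ^ 2) * (∑ a ∈ T, (1:ℝ) ^ 2) := by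
    have := Finset.sum_mul_sq_le_sq_mul_sq T (fun a => |h a|) (fun _ => (1:ℝ))
    simpa using this
  have h2 : ∑ a ∈ T, |h a| ^ 2 = ∑ a ∈ T, h a ^ 2 :=
    Finset.sum_congr rfl fun a _ => sq_abs _
  have h3 : ∑ a ∈ T, (1:ℝ) ^ 2 = (T.card : ℝ) := by simp
  have h4 : (∑ a ∈ T, |h a|) ^ 2 ≤ (s : ℝ) * ∑ a ∈ T, h a ^ 2 := by
    rw [h2, h3] at h1
    have hc : (T.card : ℝ) ≤ (s : ℝ) := by exact_mod_cast hcard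
    have hnn : (0:ℝ) ≤ ∑ a ∈ T, h a ^ 2 := Finset.sum_nonneg fun a _ => sq_nonneg _
    nlinarith
  calc ∑ a ∈ T, |h a| = Real.sqrt ((∑ a ∈ T, |h a|) ^ 2) :=
        (Real.sqrt_sq (Finset.sum_nonneg fun a _ => abs_nonneg _)).symm
    _ ≤ Real.sqrt ((s : ℝ) * ∑ a ∈ T, h a ^ 2) := Real.sqrt_le_sqrt h4
    _ = Real.sqrt s * Real.sqrt (∑ a ∈ T, h a ^ 2) := Real.sqrt_mul (Nat.cast_nonneg s) _

set_option maxHeartbeats 2000000 in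
private lemma nsp {M K : ℕ} {Ψ : Matrix (Fin M) (Fin K) ℝ} {s : ℕ} {δ : ℝ}
    (hs : 1 ≤ s) (hδ0 : 0 ≤ δ)
    (hRIP : ∀ c : Fin K → ℝ, (Finset.univ.filter fun j => c j ≠ 0).card ≤ 2 * s →
      (1 - δ) * ∑ j, c j ^ 2 ≤ ∑ i, (Ψ.mulVec c i) ^ 2 ∧
      ∑ i, (Ψ.mulVec c i) ^ 2 ≤ (1 + δ) * ∑ j, c j ^ 2)
    (h : Fin K → ℝ) (hΨh : Ψ.mulVec h = 0)
    (T0 : Finset (Fin K)) (hT0 : T0.card ≤ s) :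
    (1 - δ) * (∑ a ∈ T0, |h a|)
      ≤ Real.sqrt 2 * δ * (∑ a ∈ Finset.univ.filter (fun a => a ∉ T0), |h a|) := by
  classical
  have hspos : (0:ℝ) < (s:ℝ) := by exact_mod_cast hs
  set sq_s : ℝ := Real.sqrt s with hsqs
  have hsqspos : 0 < sq_s := Real.sqrt_pos.mpr hspos
  have hsqs2 : sq_s ^ 2 = (s:ℝ) := Real.sq_sqrt (le_of_lt hspos)
  set Z : ℝ := ∑ a ∈ Finset.univ.filter (fun a => a ∉ T0), |h a| with hZ
  have hZnn : 0 ≤ Z := Finset.sum_nonneg fun a _ => abs_nonneg _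
  -- the sorted list of indices outside T0
  set l : List (Fin K) :=
    ((Finset.univ.filter (fun a => a ∉ T0)).toList).mergeSort (fun a b => decide (|h b| ≤ |h a|))
    with hl
  have hperm : l.Perm ((Finset.univ.filter (fun a => a ∉ T0)).toList) := List.mergeSort_perm _ _
  have hmeml : ∀ a : Fin K, a ∈ l ↔ a ∉ T0 := by
    intro a
    rw [hperm.mem_iff, Finset.mem_toList, Finset.mem_filter]
    simp
  have hnodup : l.Nodup := hperm.nodup_iff.mpr (Finset.nodup_toList _)
  have hsorted : ∀ p q (hp : p < l.length) (hq : q < l.length), p < q → |h l[q]| ≤ |h l[p]| := by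
    have hpw := List.pairwise_mergeSort (le := fun a b : Fin K => decide (|h b| ≤ |h a|))
      (fun a b c hab hbc => by simp only [decide_eq_true_eq] at *; linarith)
      (fun a b => by simp only [Bool.or_eq_true, decide_eq_true_eq]; exact le_total _ _)
      ((Finset.univ.filter (fun a => a ∉ T0)).toList)
    rw [List.pairwise_iff_getElem] at hpw
    intro p q hp hq hpq
    have := hpw p q hp hq hpq
    simpa using this
  have hlen : l.length ≤ K := by
    rw [hperm.length_eq, Finset.length_toList]
    exact le_trans (Finset.card_filter_le _ _) (by simp)
  -- chunks of size s
  set chunk : ℕ → Finset (Fin K) := fun j => Finset.univ.filter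
    (fun a => a ∈ l ∧ s * j ≤ l.idxOf a ∧ l.idxOf a < s * j + s) with hchunk
  have hchunkl : ∀ j a, a ∈ chunk j → a ∈ l := by
    intro j a ha
    rw [hchunk, Finset.mem_filter] at ha
    exact ha.2.1
  have hchunk_iff : ∀ a ∈ l, ∀ j, (a ∈ chunk j ↔ j = l.idxOf a / s) := by
    intro a ha j
    constructor
    · intro hj
      rw [hchunk, Finset.mem_filter] at hj
      obtain ⟨-, -, h1, h2⟩ := hj
      exact (Nat.div_eq_of_lt_le (by rw [mul_comm]; omega)
        (by rw [add_mul, one_mul, mul_comm]; omega)).symm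
    · rintro rfl
      rw [hchunk, Finset.mem_filter]
      refine ⟨Finset.mem_univ _, ha, ?_, ?_⟩
      · rw [mul_comm]; exact Nat.div_mul_le_self _ _
      · have h1 := Nat.div_add_mod (l.idxOf a) s
        have h2 := Nat.mod_lt (l.idxOf a) (by omega : 0 < s)
        omega
  have hchunk_card : ∀ j, (chunk j).card ≤ s := by
    intro j
    have : (chunk j).card ≤ (Finset.Ico (s * j) (s * j + s)).card := by
      refine Finset.card_le_card_of_injOn (fun a => l.idxOf a) ?_ ?_
      · intro a ha
        rw [Finset.mem_coe, hchunk, Finset.mem_filter] at ha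
        exact Finset.mem_Ico.mpr ⟨ha.2.2.1, ha.2.2.2⟩
      · intro a ha b hb hab
        replace ha : a ∈ chunk j := ha
        replace hb : b ∈ chunk j := hb
        have ha' : a ∈ l := hchunkl j a ha
        have hb' : b ∈ l := hchunkl j b hb
        exact (List.idxOf_inj ha').mp hab
    simpa using this
  have hchunk_full : ∀ j a, a ∈ chunk (j + 1) → s ≤ (chunk j).card := by
    intro j a ha
    have hal : a ∈ l := hchunkl _ a ha
    have haidx : s * (j + 1) ≤ l.idxOf a := by
      rw [hchunk, Finset.mem_filter] at ha
      exact ha.2.2.1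
    have hidxlen : l.idxOf a < l.length := List.idxOf_lt_length_iff.mpr hal
    have hlb : s * j + s ≤ l.length := by
      have : s * (j + 1) = s * j + s := by ring
      omega
    have : (Finset.Ico (s * j) (s * j + s)).card ≤ (chunk j).card := by
      refine Finset.card_le_card_of_injOn
        (fun p => if hp : p < l.length then l[p] else a) ?_ ?_
      · intro p hp
        rw [Finset.mem_coe, Finset.mem_Ico] at hp
        have hplen : p < l.length := by omega
        show (if hp : p < l.length then l[p] else a) ∈ chunk j
        rw [dif_pos hplen]
        rw [hchunk, Finset.mem_filter]
        refine ⟨Finset.mem_univ _, List.getElem_mem _, ?_, ?_⟩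
        · rw [hnodup.idxOf_getElem p hplen]; exact hp.1
        · rw [hnodup.idxOf_getElem p hplen]; exact hp.2
      · intro p hp q hq hpq
        simp only [Finset.coe_Ico, Set.mem_Ico] at hp hq
        have hplen : p < l.length := by omega
        have hqlen : q < l.length := by omega
        simp only [dif_pos hplen, dif_pos hqlen] at hpq
        exact (hnodup.getElem_inj_iff).mp hpq
    simpa using this
  have hchunk_sorted : ∀ j a b, a ∈ chunk (j + 1) → b ∈ chunk j → |h a| ≤ |h b| := by
    intro j a b ha hb
    have hal : a ∈ l := hchunkl _ a ha
    have hbl : b ∈ l := hchunkl _ b hb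
    have hia : l.idxOf a < l.length := List.idxOf_lt_length_iff.mpr hal
    have hib : l.idxOf b < l.length := List.idxOf_lt_length_iff.mpr hbl
    rw [hchunk, Finset.mem_filter] at ha hb
    have hlt : l.idxOf b < l.idxOf a := by
      have h1 : l.idxOf b < s * j + s := hb.2.2.2
      have h2 : s * (j + 1) ≤ l.idxOf a := ha.2.2.1
      have : s * (j + 1) = s * j + s := by ring
      omega
    have := hsorted (l.idxOf b) (l.idxOf a) hib hia hlt
    rwa [List.getElem_idxOf hia, List.getElem_idxOf hib] at this
  -- block sums
  set S : ℕ → ℝ := fun j => ∑ a ∈ chunk j, |h a| with hS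
  set Y : ℕ → ℝ := fun j => ∑ a ∈ chunk j, h a ^ 2 with hY
  have hSnn : ∀ j, 0 ≤ S j := fun j => Finset.sum_nonneg fun a _ => abs_nonneg _
  have hYnn : ∀ j, 0 ≤ Y j := fun j => Finset.sum_nonneg fun a _ => sq_nonneg _
  have hkey : ∀ j, (s:ℝ) * Y (j + 1) ≤ S j * S (j + 1) := by
    intro j
    rcases (chunk (j + 1)).eq_empty_or_nonempty with hemp | ⟨a0, ha0⟩
    · simp [hS, hY, hemp]
    · have hcardj : (chunk j).card = s := le_antisymm (hchunk_card j) (hchunk_full j a0 ha0)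
      have step : ∀ a ∈ chunk (j + 1), (s:ℝ) * (h a) ^ 2 ≤ S j * |h a| := by
        intro a ha
        have h1 : (s:ℝ) * |h a| ≤ S j := by
          have h2 : ∑ _b ∈ chunk j, |h a| ≤ ∑ b ∈ chunk j, |h b| :=
            Finset.sum_le_sum fun b hb => hchunk_sorted j a b ha hb
          rw [Finset.sum_const, hcardj, nsmul_eq_mul] at h2
          exact h2
        calc (s:ℝ) * (h a) ^ 2 = ((s:ℝ) * |h a|) * |h a| := by
              rw [mul_assoc, abs_mul_abs_self, sq]
          _ ≤ S j * |h a| := mul_le_mul_of_nonneg_right h1 (abs_nonneg _)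
      calc (s:ℝ) * Y (j + 1) = ∑ a ∈ chunk (j + 1), (s:ℝ) * (h a) ^ 2 := by
            rw [hY]; exact Finset.mul_sum _ _ _
        _ ≤ ∑ a ∈ chunk (j + 1), S j * |h a| := Finset.sum_le_sum step
        _ = S j * S (j + 1) := by rw [hS]; exact (Finset.mul_sum _ _ _).symm
  have hsqY : ∀ j, Real.sqrt (Y (j + 1)) ≤ (S j + S (j + 1)) / (2 * sq_s) := by
    intro j
    have hrhsnn : 0 ≤ (S j + S (j + 1)) / (2 * sq_s) := by positivity
    have hYle : Y (j + 1) ≤ ((S j + S (j + 1)) / (2 * sq_s)) ^ 2 := by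
      rw [div_pow, le_div_iff₀ (by positivity)]
      have : (2 * sq_s) ^ 2 = 4 * (s:ℝ) := by rw [mul_pow, hsqs2]; ring
      rw [this]
      nlinarith [hkey j, sq_nonneg (S j - S (j + 1)), hYnn (j + 1), hSnn j, hSnn (j + 1)]
    calc Real.sqrt (Y (j + 1)) ≤ Real.sqrt (((S j + S (j + 1)) / (2 * sq_s)) ^ 2) :=
          Real.sqrt_le_sqrt hYle
      _ = (S j + S (j + 1)) / (2 * sq_s) := Real.sqrt_sq hrhsnn
  -- chunk vectors
  set e : ℕ → (Fin K → ℝ) := fun j a => if a ∈ chunk j then h a else 0 with he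
  have hYe : ∀ j, ∑ a, (e j a) ^ 2 = Y j := by
    intro j
    show ∑ a, (if a ∈ chunk j then h a else 0) ^ 2 = ∑ a ∈ chunk j, h a ^ 2
    have hset : ∑ a ∈ chunk j, h a ^ 2 = ∑ a ∈ Finset.univ.filter (· ∈ chunk j), h a ^ 2 := by
      congr 1; simp
    rw [hset, Finset.sum_filter]
    refine Finset.sum_congr rfl fun a _ => ?_
    by_cases hac : a ∈ chunk j <;> simp [hac]
  have hsuppe : ∀ j, (Finset.univ.filter fun a => e j a ≠ 0).card ≤ s := by
    intro j
    refine le_trans (Finset.card_le_card ?_) (hchunk_card j)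
    intro a ha
    rw [Finset.mem_filter] at ha
    by_contra hac
    exact ha.2 (by simp [he, hac])
  -- partition of Z
  have hchunk_fiber : ∀ j, chunk j
      = (Finset.univ.filter (fun a => a ∉ T0)).filter (fun a => l.idxOf a / s = j) := by
    intro j
    ext a
    simp only [Finset.mem_filter, Finset.mem_univ, true_and]
    constructor
    · intro ha
      have hal : a ∈ l := hchunkl j a ha
      exact ⟨(hmeml a).mp hal, ((hchunk_iff a hal j).mp ha).symm⟩
    · rintro ⟨ha1, ha2⟩
      have hal : a ∈ l := (hmeml a).mpr ha1
      exact (hchunk_iff a hal j).mpr ha2.symm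
  have hSZ : ∑ j ∈ Finset.range (K + 1), S j = Z := by
    show ∑ j ∈ Finset.range (K + 1), ∑ a ∈ chunk j, |h a|
      = ∑ a ∈ Finset.univ.filter (fun a => a ∉ T0), |h a|
    calc ∑ j ∈ Finset.range (K + 1), ∑ a ∈ chunk j, |h a|
        = ∑ j ∈ Finset.range (K + 1), ∑ a ∈ (Finset.univ.filter (fun a => a ∉ T0)).filter
            (fun a => l.idxOf a / s = j), |h a| := by
          refine Finset.sum_congr rfl fun j _ => ?_
          rw [hchunk_fiber j]
      _ = ∑ a ∈ Finset.univ.filter (fun a => a ∉ T0), |h a| := by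
          refine Finset.sum_fiberwise_of_maps_to ?_ _
          intro a ha
          rw [Finset.mem_filter] at ha
          have hal : a ∈ l := (hmeml a).mpr ha.2
          have : l.idxOf a < l.length := List.idxOf_lt_length_iff.mpr hal
          rw [Finset.mem_range]
          have := Nat.div_le_self (l.idxOf a) s
          omega
  -- T0 vector and x
  set hT0v : Fin K → ℝ := fun a => if a ∈ T0 then h a else 0 with hT0v_def
  set X0 : ℝ := ∑ a ∈ T0, h a ^ 2 with hX0
  have hX0nn : 0 ≤ X0 := Finset.sum_nonneg fun a _ => sq_nonneg _
  have hX0e : ∑ a, (hT0v a) ^ 2 = X0 := by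
    show ∑ a, (if a ∈ T0 then h a else 0) ^ 2 = ∑ a ∈ T0, h a ^ 2
    have hset : ∑ a ∈ T0, h a ^ 2 = ∑ a ∈ Finset.univ.filter (· ∈ T0), h a ^ 2 := by
      congr 1; simp
    rw [hset, Finset.sum_filter]
    refine Finset.sum_congr rfl fun a _ => ?_
    by_cases hac : a ∈ T0 <;> simp [hac]
  have hsuppT0 : (Finset.univ.filter fun a => hT0v a ≠ 0).card ≤ s := by
    refine le_trans (Finset.card_le_card ?_) hT0
    intro a ha
    rw [Finset.mem_filter] at ha
    by_contra hac
    exact ha.2 (by simp [hT0v_def, hac])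
  set x : Fin K → ℝ := hT0v + e 0 with hx
  set X : ℝ := ∑ a, x a ^ 2 with hXdef
  have hXnn : 0 ≤ X := Finset.sum_nonneg fun a _ => sq_nonneg _
  have hnotboth : ∀ j a, a ∈ T0 → a ∉ chunk j := by
    intro j a haT hac
    exact (hmeml a).mp (hchunkl j a hac) haT
  have hd1 : ∀ j a, hT0v a = 0 ∨ e j a = 0 := by
    intro j a
    by_cases haT : a ∈ T0
    · right; simp [he, hnotboth j a haT]
    · left; simp [hT0v_def, haT]
  have hd2 : ∀ j a, e 0 a = 0 ∨ e (j + 1) a = 0 := by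
    intro j a
    by_cases hac : a ∈ chunk 0
    · right
      have : a ∉ chunk (j + 1) := by
        intro hac2
        rw [hchunk, Finset.mem_filter] at hac hac2
        have h1 : l.idxOf a < s * 0 + s := hac.2.2.2
        have h2 : s * (j + 1) ≤ l.idxOf a := hac2.2.2.1
        have h3 : s * (j + 1) = s * j + s := Nat.mul_succ s j
        omega
      simp [he, this]
    · left; simp [he, hac]
  have hX_split : X = X0 + Y 0 := by
    rw [hXdef, ← hX0e, ← hYe 0, ← Finset.sum_add_distrib]
    refine Finset.sum_congr rfl fun a _ => ?_
    have : x a = hT0v a + e 0 a := rfl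
    rw [this]
    rcases hd1 0 a with h0 | h0 <;> rw [h0] <;> ring
  have hxsupp : (Finset.univ.filter fun a => x a ≠ 0).card ≤ 2 * s := by
    have hsub : (Finset.univ.filter fun a => x a ≠ 0)
        ⊆ (Finset.univ.filter fun a => hT0v a ≠ 0) ∪ (Finset.univ.filter fun a => e 0 a ≠ 0) := by
      intro a ha
      rw [Finset.mem_filter] at ha
      have : x a = hT0v a + e 0 a := rfl
      by_contra hcon
      rw [Finset.mem_union, Finset.mem_filter, Finset.mem_filter] at hcon
      push_neg at hcon
      have h1 : hT0v a = 0 := by by_contra hne; exact hne (hcon.1 (Finset.mem_univ a))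
      have h2 : e 0 a = 0 := by by_contra hne; exact hne (hcon.2 (Finset.mem_univ a))
      exact ha.2 (by rw [this, h1, h2, add_zero])
    refine le_trans (Finset.card_le_card hsub) (le_trans (Finset.card_union_le _ _) ?_)
    have := hsuppT0
    have := hsuppe 0
    omega
  -- decomposition x = h - ∑ e (j+1)
  have hsum_a : ∀ a, ∑ j ∈ Finset.range (K + 1), e j a = if a ∈ T0 then 0 else h a := by
    intro a
    by_cases haT : a ∈ T0
    · rw [if_pos haT]
      refine Finset.sum_eq_zero fun j _ => ?_
      simp [he, hnotboth j a haT]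
    · rw [if_neg haT]
      have hal : a ∈ l := (hmeml a).mpr haT
      have hj0mem : l.idxOf a / s ∈ Finset.range (K + 1) := by
        rw [Finset.mem_range]
        have h1 : l.idxOf a < l.length := List.idxOf_lt_length_iff.mpr hal
        have := Nat.div_le_self (l.idxOf a) s
        omega
      rw [Finset.sum_eq_single_of_mem _ hj0mem]
      · simp only [he]
        rw [if_pos ((hchunk_iff a hal _).mpr rfl)]
      · intro b _ hb
        simp only [he]
        rw [if_neg (fun hc => hb ((hchunk_iff a hal b).mp hc))]
  have hdec : x = h - ∑ j ∈ Finset.range K, e (j + 1) := by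
    funext a
    have h1 := hsum_a a
    rw [Finset.sum_range_succ'] at h1
    have hxa : x a = hT0v a + e 0 a := rfl
    have hsa : (∑ j ∈ Finset.range K, e (j + 1)) a = ∑ j ∈ Finset.range K, e (j + 1) a := by
      simp
    rw [Pi.sub_apply, hxa, hsa]
    by_cases haT : a ∈ T0
    · rw [if_pos haT] at h1
      have h2 : e 0 a = 0 := by simp [he, hnotboth 0 a haT]
      have h3 : hT0v a = h a := by simp [hT0v_def, haT]
      linarith [h1, h2, h3]
    · rw [if_neg haT] at h1
      have h3 : hT0v a = 0 := by simp [hT0v_def, haT]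
      rw [h3]
      linarith
  have hΨx : Ψ.mulVec x = - ∑ j ∈ Finset.range K, Ψ.mulVec (e (j + 1)) := by
    rw [hdec, Matrix.mulVec_sub, hΨh, mulVec_sum]
    simp
  -- quadratic form bound
  have hQeq : ∑ i, (Ψ.mulVec x i) ^ 2
      = - ∑ j ∈ Finset.range K, dotR (Ψ.mulVec x) (Ψ.mulVec (e (j + 1))) := by
    rw [← dotR_self, ← dotR_sum, ← dotR_neg, ← hΨx]
  have hcross : ∀ j, |dotR (Ψ.mulVec x) (Ψ.mulVec (e (j + 1)))|
      ≤ δ * ((Real.sqrt X0 + Real.sqrt (Y 0)) * Real.sqrt (Y (j + 1))) := by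
    intro j
    have hmv : Ψ.mulVec x = Ψ.mulVec hT0v + Ψ.mulVec (e 0) := by
      rw [hx, Matrix.mulVec_add]
    rw [hmv, dotR_add_left]
    refine le_trans (abs_add_le _ _) ?_
    have hc1 := cross hδ0 hRIP hT0v (e (j + 1)) (hd1 (j + 1))
      (by have := hsuppT0; have := hsuppe (j + 1); omega)
    have hc2 := cross hδ0 hRIP (e 0) (e (j + 1)) (hd2 j)
      (by have := hsuppe 0; have := hsuppe (j + 1); omega)
    rw [hX0e, hYe] at hc1
    rw [hYe, hYe] at hc2
    calc |dotR (Ψ.mulVec hT0v) (Ψ.mulVec (e (j + 1)))|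
          + |dotR (Ψ.mulVec (e 0)) (Ψ.mulVec (e (j + 1)))|
        ≤ δ * (Real.sqrt X0 * Real.sqrt (Y (j + 1)))
          + δ * (Real.sqrt (Y 0) * Real.sqrt (Y (j + 1))) := add_le_add hc1 hc2
      _ = δ * ((Real.sqrt X0 + Real.sqrt (Y 0)) * Real.sqrt (Y (j + 1))) := by ring
  have hsum_sqY : ∑ j ∈ Finset.range K, Real.sqrt (Y (j + 1)) ≤ Z / sq_s := by
    have h1 : ∑ j ∈ Finset.range K, Real.sqrt (Y (j + 1))
        ≤ ∑ j ∈ Finset.range K, (S j + S (j + 1)) / (2 * sq_s) :=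
      Finset.sum_le_sum fun j _ => hsqY j
    have h2 : ∑ j ∈ Finset.range K, S j ≤ Z := by
      have := Finset.sum_range_succ S K
      have := hSnn K
      linarith [hSZ]
    have h3 : ∑ j ∈ Finset.range K, S (j + 1) ≤ Z := by
      have := Finset.sum_range_succ' S K
      have := hSnn 0
      linarith [hSZ]
    have h4 : ∑ j ∈ Finset.range K, (S j + S (j + 1)) / (2 * sq_s)
        = ((∑ j ∈ Finset.range K, S j) + ∑ j ∈ Finset.range K, S (j + 1)) / (2 * sq_s) := by
      rw [← Finset.sum_add_distrib, Finset.sum_div]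
    rw [h4] at h1
    refine le_trans h1 ?_
    rw [div_le_div_iff₀ (by positivity) hsqspos]
    ring_nf
    have h3' : ∑ x ∈ Finset.range K, S (1 + x) ≤ Z := by simpa only [Nat.add_comm] using h3
    nlinarith [h2, h3', hsqspos, mul_le_mul_of_nonneg_right h2 hsqspos.le,
      mul_le_mul_of_nonneg_right h3' hsqspos.le]
  have hsqrt2 : Real.sqrt X0 + Real.sqrt (Y 0) ≤ Real.sqrt 2 * Real.sqrt X := by
    have h1 : (Real.sqrt X0 + Real.sqrt (Y 0)) ^ 2 ≤ 2 * X := by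
      have e1 : Real.sqrt X0 ^ 2 = X0 := Real.sq_sqrt hX0nn
      have e2 : Real.sqrt (Y 0) ^ 2 = Y 0 := Real.sq_sqrt (hYnn 0)
      nlinarith [sq_nonneg (Real.sqrt X0 - Real.sqrt (Y 0)), hX_split]
    have h2 : Real.sqrt X0 + Real.sqrt (Y 0) ≥ 0 := by positivity
    calc Real.sqrt X0 + Real.sqrt (Y 0)
        = Real.sqrt ((Real.sqrt X0 + Real.sqrt (Y 0)) ^ 2) := (Real.sqrt_sq h2).symm
      _ ≤ Real.sqrt (2 * X) := Real.sqrt_le_sqrt h1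
      _ = Real.sqrt 2 * Real.sqrt X := Real.sqrt_mul (by norm_num) _
  have hQ2 : ∑ i, (Ψ.mulVec x i) ^ 2 ≤ Real.sqrt 2 * δ * Real.sqrt X * (Z / sq_s) := by
    rw [hQeq]
    have h1 : - ∑ j ∈ Finset.range K, dotR (Ψ.mulVec x) (Ψ.mulVec (e (j + 1)))
        ≤ ∑ j ∈ Finset.range K, |dotR (Ψ.mulVec x) (Ψ.mulVec (e (j + 1)))| :=
      le_trans (neg_le_abs _) (le_trans (Finset.abs_sum_le_sum_abs _ _)
        (le_of_eq (Finset.sum_congr rfl fun j _ => rfl)))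
    refine le_trans h1 ?_
    have h2 : ∑ j ∈ Finset.range K, |dotR (Ψ.mulVec x) (Ψ.mulVec (e (j + 1)))|
        ≤ δ * (Real.sqrt X0 + Real.sqrt (Y 0)) * ∑ j ∈ Finset.range K, Real.sqrt (Y (j + 1)) := by
      rw [Finset.mul_sum]
      refine Finset.sum_le_sum fun j _ => ?_
      have := hcross j
      linarith [hcross j]
    refine le_trans h2 ?_
    have h3 : δ * (Real.sqrt X0 + Real.sqrt (Y 0)) ≤ δ * (Real.sqrt 2 * Real.sqrt X) :=
      mul_le_mul_of_nonneg_left hsqrt2 hδ0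
    have h4 : 0 ≤ ∑ j ∈ Finset.range K, Real.sqrt (Y (j + 1)) :=
      Finset.sum_nonneg fun j _ => Real.sqrt_nonneg _
    calc δ * (Real.sqrt X0 + Real.sqrt (Y 0)) * ∑ j ∈ Finset.range K, Real.sqrt (Y (j + 1))
        ≤ δ * (Real.sqrt 2 * Real.sqrt X) * (Z / sq_s) := by
          refine mul_le_mul h3 hsum_sqY h4 (by positivity)
      _ = Real.sqrt 2 * δ * Real.sqrt X * (Z / sq_s) := by ring
  have hQ1 : (1 - δ) * X ≤ ∑ i, (Ψ.mulVec x i) ^ 2 := (hRIP x hxsupp).1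
  -- conclude
  have hL1 : ∑ a ∈ T0, |h a| ≤ sq_s * Real.sqrt X0 := l1_le_sqrt_card T0 h s hT0
  have hX0leX : Real.sqrt X0 ≤ Real.sqrt X := Real.sqrt_le_sqrt (by linarith [hX_split, hYnn 0])
  by_cases hXz : X = 0
  · have hX00 : X0 = 0 := by linarith [hX_split, hYnn 0, hX0nn]
    have : ∑ a ∈ T0, |h a| ≤ 0 := by
      rw [hX00] at hL1
      simpa using hL1
    have hL10 : ∑ a ∈ T0, |h a| = 0 :=
      le_antisymm this (Finset.sum_nonneg fun a _ => abs_nonneg _)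
    rw [hL10, mul_zero]
    positivity
  · have hXpos : 0 < X := lt_of_le_of_ne hXnn (Ne.symm hXz)
    have hsXpos : 0 < Real.sqrt X := Real.sqrt_pos.mpr hXpos
    have hXsq : Real.sqrt X * Real.sqrt X = X := Real.mul_self_sqrt hXnn
    have hmain : (1 - δ) * Real.sqrt X ≤ Real.sqrt 2 * δ * (Z / sq_s) := by
      have h5 : (1 - δ) * X ≤ Real.sqrt 2 * δ * Real.sqrt X * (Z / sq_s) := le_trans hQ1 hQ2
      nlinarith [h5, hsXpos, hXsq]
    rcases le_or_gt (1 - δ) 0 with hneg | hpos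
    · have h6 : (1 - δ) * (∑ a ∈ T0, |h a|) ≤ 0 :=
        mul_nonpos_of_nonpos_of_nonneg hneg (Finset.sum_nonneg fun a _ => abs_nonneg _)
      refine le_trans h6 ?_
      positivity
    · have h7 : (1 - δ) * (∑ a ∈ T0, |h a|) ≤ (1 - δ) * (sq_s * Real.sqrt X) := by
        refine mul_le_mul_of_nonneg_left ?_ (le_of_lt hpos)
        exact le_trans hL1 (mul_le_mul_of_nonneg_left hX0leX (le_of_lt hsqspos))
      refine le_trans h7 ?_
      have h8 : sq_s * ((1 - δ) * Real.sqrt X) ≤ sq_s * (Real.sqrt 2 * δ * (Z / sq_s)) :=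
        mul_le_mul_of_nonneg_left hmain (le_of_lt hsqspos)
      have h9 : sq_s * (Real.sqrt 2 * δ * (Z / sq_s)) = Real.sqrt 2 * δ * Z := by
        field_simp
      nlinarith [h8, h9]


set_option maxHeartbeats 1000000 in
/-- If `Ψ` satisfies the RIP of order `2s` with `δ_{2s} < √2 − 1` and `c̄` is `s`-sparse
with `u = Ψ c̄`, then `c̄` is an ℓ₁-minimizer subject to `Ψc = u`
(`‖c̄‖₁ ≤ ‖c‖₁` for every feasible `c`), and it is the unique `s`-sparse feasible point
achieving this minimal ℓ₁-norm. -/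
theorem sparse_vector_is_l1_minimizer_of_rip
    {M K : ℕ} (Ψ : Matrix (Fin M) (Fin K) ℝ) (s : ℕ) (δ : ℝ)
    (hδ0 : 0 ≤ δ) (hδ : δ < Real.sqrt 2 - 1)
    (hRIP : ∀ c : Fin K → ℝ, (Finset.univ.filter fun j => c j ≠ 0).card ≤ 2 * s →
      (1 - δ) * ∑ j, c j ^ 2 ≤ ∑ i, (Ψ.mulVec c i) ^ 2 ∧
      ∑ i, (Ψ.mulVec c i) ^ 2 ≤ (1 + δ) * ∑ j, c j ^ 2)
    (cbar : Fin K → ℝ)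
    (hsparse : (Finset.univ.filter fun j => cbar j ≠ 0).card ≤ s)
    (u : Fin M → ℝ) (hu : u = Ψ.mulVec cbar) :
    (∀ c : Fin K → ℝ, Ψ.mulVec c = u → ∑ j, |cbar j| ≤ ∑ j, |c j|) ∧
    (∀ c : Fin K → ℝ, Ψ.mulVec c = u →
      (Finset.univ.filter fun j => c j ≠ 0).card ≤ s →
      ∑ j, |c j| = ∑ j, |cbar j| → c = cbar) := by
  have hsq2 : (Real.sqrt 2) ^ 2 = 2 := Real.sq_sqrt (by norm_num)
  have hsq2nn : 0 ≤ Real.sqrt 2 := Real.sqrt_nonneg 2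
  have hsq2lt : Real.sqrt 2 < 2 := by nlinarith
  have hδ1 : δ < 1 := by nlinarith
  constructor
  · -- minimality
    intro c hc
    rcases Nat.eq_zero_or_pos s with hs0 | hs
    · have hcb : ∀ j, cbar j = 0 := by
        intro j
        by_contra hj
        have hmem : j ∈ Finset.univ.filter (fun j => cbar j ≠ 0) :=
          Finset.mem_filter.mpr ⟨Finset.mem_univ _, hj⟩
        have := Finset.card_pos.mpr ⟨j, hmem⟩
        omega
      calc ∑ j, |cbar j| = 0 := Finset.sum_eq_zero fun j _ => by rw [hcb j, abs_zero]
        _ ≤ ∑ j, |c j| := Finset.sum_nonneg fun j _ => abs_nonneg _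
    · set h : Fin K → ℝ := c - cbar with hh
      have hΨh : Ψ.mulVec h = 0 := by
        rw [hh, Matrix.mulVec_sub, hc, hu]
        simp
      set T0 : Finset (Fin K) := Finset.univ.filter (fun j => cbar j ≠ 0) with hT0
      have hnsp := nsp hs hδ0 hRIP h hΨh T0 hsparse
      set Z : ℝ := ∑ a ∈ Finset.univ.filter (fun a => a ∉ T0), |h a| with hZ
      set L : ℝ := ∑ a ∈ T0, |h a| with hL
      have hZnn : 0 ≤ Z := Finset.sum_nonneg fun a _ => abs_nonneg _
      have hLnn : 0 ≤ L := Finset.sum_nonneg fun a _ => abs_nonneg _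
      have huniveq : Finset.univ.filter (fun a => a ∈ T0) = T0 := by simp
      have hsplitc : ∑ j, |c j|
          = ∑ a ∈ T0, |c a| + ∑ a ∈ Finset.univ.filter (fun a => a ∉ T0), |c a| := by
        rw [← Finset.sum_filter_add_sum_filter_not Finset.univ (fun a => a ∈ T0)
          (fun a => |c a|), huniveq]
      have hsplitcb : ∑ j, |cbar j| = ∑ a ∈ T0, |cbar a| := by
        rw [← Finset.sum_filter_add_sum_filter_not Finset.univ (fun a => a ∈ T0)
          (fun a => |cbar a|), huniveq]
        have : ∑ a ∈ Finset.univ.filter (fun a => a ∉ T0), |cbar a| = 0 := by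
          refine Finset.sum_eq_zero fun a ha => ?_
          rw [Finset.mem_filter] at ha
          have : cbar a = 0 := by
            by_contra hne
            exact ha.2 (Finset.mem_filter.mpr ⟨Finset.mem_univ _, hne⟩)
          rw [this, abs_zero]
        rw [this, add_zero]
      have hZeq : ∑ a ∈ Finset.univ.filter (fun a => a ∉ T0), |c a| = Z := by
        refine Finset.sum_congr rfl fun a ha => ?_
        rw [Finset.mem_filter] at ha
        have hcb0 : cbar a = 0 := by
          by_contra hne
          exact ha.2 (Finset.mem_filter.mpr ⟨Finset.mem_univ _, hne⟩)
        have : h a = c a := by rw [hh]; simp [hcb0]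
        rw [this]
      have hT0bound : ∑ a ∈ T0, |cbar a| - L ≤ ∑ a ∈ T0, |c a| := by
        rw [hL, ← Finset.sum_sub_distrib]
        refine Finset.sum_le_sum fun a _ => ?_
        have h1 := abs_sub_abs_le_abs_sub (cbar a) (c a)
        have h2 : cbar a - c a = -(h a) := by rw [hh]; simp [Pi.sub_apply]
        rw [h2, abs_neg] at h1
        linarith
      have hcoef : 0 < 1 - δ - Real.sqrt 2 * δ := by
        have hq : 0 < (Real.sqrt 2 - 1 - δ) * (1 + Real.sqrt 2) :=
          mul_pos (by linarith) (by linarith)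
        nlinarith
      have hLZ : L ≤ Z := by
        nlinarith [hnsp, hcoef, hZnn, hLnn]
      linarith [hsplitc, hsplitcb, hZeq, hT0bound, hLZ]
  · -- uniqueness
    intro c hc hcs _heq
    have hd : Ψ.mulVec (c - cbar) = 0 := by
      rw [Matrix.mulVec_sub, hc, hu]
      simp
    have hcard : (Finset.univ.filter fun j => (c - cbar) j ≠ 0).card ≤ 2 * s := by
      have hsub : (Finset.univ.filter fun j => (c - cbar) j ≠ 0)
          ⊆ (Finset.univ.filter fun j => c j ≠ 0) ∪ (Finset.univ.filter fun j => cbar j ≠ 0) := by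
        intro a ha
        rw [Finset.mem_filter] at ha
        by_contra hcon
        rw [Finset.mem_union, Finset.mem_filter, Finset.mem_filter] at hcon
        push_neg at hcon
        have h1 : c a = 0 := by
          by_contra hne; exact hne (hcon.1 (Finset.mem_univ a))
        have h2 : cbar a = 0 := by
          by_contra hne; exact hne (hcon.2 (Finset.mem_univ a))
        exact ha.2 (by simp [Pi.sub_apply, h1, h2])
      refine le_trans (Finset.card_le_card hsub) (le_trans (Finset.card_union_le _ _) ?_)
      omega
    have h1 := (hRIP (c - cbar) hcard).1
    rw [hd] at h1
    have h1' : (1 - δ) * ∑ j, (c - cbar) j ^ 2 ≤ 0 := by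
      have hz : ∑ i, ((0 : Fin M → ℝ) i) ^ 2 = (0:ℝ) := by simp
      rw [hz] at h1
      exact h1
    have hzero : ∑ j, (c - cbar) j ^ 2 = 0 := by
      have hnn : 0 ≤ ∑ j, (c - cbar) j ^ 2 := Finset.sum_nonneg fun j _ => sq_nonneg _
      nlinarith [h1', hnn, hδ1]
    have := eq_zero_of_sum_sq _ hzero
    exact sub_eq_zero.mp this
end
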